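/- For Dirac masses on the real line, the generalized Wasserstein distance is W^{a,b}_p(δ_0, δ_x) = min{2a, bx} for every x ≥ 0. -/

import Mathlib

open MeasureTheory ENNReal Filter Topology

noncomputable section

/-- `ℝ^d` as a Euclidean space. -/
abbrev Euc (d : ℕ) := EuclideanSpace ℝ (Fin d)

variable {E : Type*} [NormedAddCommGroup E] [MeasurableSpace E]

/-- Total mass `|μ| = μ(ℝ^d)` of a nonnegative measure, as a real number. -/
def mass (μ : Measure E) : ℝ := (μ Set.univ).toReal

/-- Total variation norm `|μ - ν|` of the difference of two nonnegative finite
measures, computed via the Jordan decomposition `(μ - ν) + (ν - μ)`. -/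
def tvDist (μ ν : Measure E) : ℝ := ((μ - ν) Set.univ + (ν - μ) Set.univ).toReal

/-- `μ` has finite `p`-th moment. -/
def FinMom (p : ℝ) (μ : Measure E) : Prop :=
  ∫⁻ x, ENNReal.ofReal (‖x‖ ^ p) ∂μ < ⊤

/-- `π` is a transference plan from `μ` to `ν`: its first and second marginals
are `μ` and `ν` respectively. -/
def IsPlan (π : Measure (E × E)) (μ ν : Measure E) : Prop :=
  π.map Prod.fst = μ ∧ π.map Prod.snd = ν

/-- Transportation cost `∫ |x - y|^p dπ(x,y)` of a plan `π`. -/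
def Wcost (p : ℝ) (π : Measure (E × E)) : ℝ≥0∞ :=
  ∫⁻ z, ENNReal.ofReal (dist z.1 z.2 ^ p) ∂π

/-- The Wasserstein distance `W_p(μ,ν) = (inf_π ∫ |x-y|^p dπ)^{1/p}`. -/
def Wp (p : ℝ) (μ ν : Measure E) : ℝ :=
  ((sInf (Wcost p '' {π | IsPlan π μ ν})) ^ (1 / p)).toReal

/-- The set of admissible values `a|μ-μ̃| + a|ν-ν̃| + b W_p(μ̃,ν̃)` over all
`μ̃, ν̃ ∈ M^p` with `|μ̃| = |ν̃|`. -/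
def gwSet (a b p : ℝ) (μ ν : Measure E) : Set ℝ :=
  { r | ∃ μ' ν' : Measure E, IsFiniteMeasure μ' ∧ IsFiniteMeasure ν' ∧
      FinMom p μ' ∧ FinMom p ν' ∧ μ' Set.univ = ν' Set.univ ∧
      r = a * tvDist μ μ' + a * tvDist ν ν' + b * Wp p μ' ν' }

/-- The generalized Wasserstein distance `W^{a,b}_p`. -/
def GW (a b p : ℝ) (μ ν : Measure E) : ℝ := sInf (gwSet a b p μ ν)

/-- The support of a measure: the set of points all of whose open neighbourhoods
have positive measure. -/
def msupp (μ : Measure E) : Set E := {x : E | ∀ U : Set E, IsOpen U → x ∈ U → μ U ≠ 0}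

/-- Weak convergence of a sequence of measures: convergence of integrals of all
bounded continuous functions. -/
def WeakConv {F : Type*} [MeasurableSpace F] [TopologicalSpace F]
    (μs : ℕ → Measure F) (μ : Measure F) : Prop :=
  ∀ f : F → ℝ, Continuous f → (∃ C : ℝ, ∀ x, |f x| ≤ C) →
    Tendsto (fun n => ∫ x, f x ∂(μs n)) atTop (𝓝 (∫ x, f x ∂μ))

/-- A family of measures is tight if for every `ε > 0` there is a compact set
whose complement has measure less than `ε` for all members of the family. -/
def Tight (F : Set (Measure E)) : Prop :=
  ∀ ε : ℝ, 0 < ε → ∃ K : Set E, IsCompact K ∧ ∀ μ ∈ F, μ Kᶜ < ENNReal.ofReal ε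

end

/-!
A unit Dirac mass can be moved from `c` to `d`, at cost `b · dist c d`, or deleted and recreated,
at cost `2a`. If admissible `μ̃, ν̃` of common mass `m` put masses `u` at `c` and `v` at `d`, every
plan between them carries at least `s = u + v - m` from `c` to `d`, so for `s ∈ [0, 1]` and `p ≥ 1`
the transport term is at least `b · dist c d · s` (as `s ^ p ≤ s`), while the two total-variation
terms add up to at least `a (2 - 2s)`. The cost is therefore at least a convex combination of `2a`
and `b · dist c d`; the choices `μ̃ = ν̃ = 0` and `μ̃ = δ_c, ν̃ = δ_d` attain the two values.
-/

open Set

namespace MeasureTheory.Measure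

variable {α : Type*} [MeasurableSpace α]

lemma tsub_apply_le_sub_apply (μ ν : Measure α) [IsFiniteMeasure μ] [IsFiniteMeasure ν]
    (s : Set α) : μ s - ν s ≤ (μ - ν) s :=
  tsub_le_iff_right.2 <| Measure.le_iff'.1 (sub_le_iff_le_add.1 le_rfl) s

end MeasureTheory.Measure

section TotalVariation

variable {α : Type*} [MeasurableSpace α] {μ ν : Measure α}

lemma tvDist_nonneg : 0 ≤ tvDist μ ν := ENNReal.toReal_nonneg

lemma tvDist_self : tvDist μ μ = 0 := by
  simp [tvDist, Measure.sub_self]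

lemma tvDist_zero_right [IsFiniteMeasure μ] : tvDist μ 0 = (μ univ).toReal := by
  simp [tvDist, Measure.sub_zero, Measure.zero_sub]

lemma one_add_sub_two_mul_le_tvDist_dirac [MeasurableSingletonClass α] (c : α)
    [IsFiniteMeasure μ] :
    1 + (μ univ).toReal - 2 * (μ {c}).toReal ≤ tvDist (Measure.dirac c) μ := by
  have hc : 1 - μ {c} ≤ (Measure.dirac c - μ) univ := by
    simpa using (Measure.tsub_apply_le_sub_apply (Measure.dirac c) μ {c}).trans
      (measure_mono (subset_univ {c}))
  have hcompl : μ {c}ᶜ ≤ (μ - Measure.dirac c) univ := by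
    simpa using (Measure.tsub_apply_le_sub_apply μ (Measure.dirac c) {c}ᶜ).trans
      (measure_mono (subset_univ {c}ᶜ))
  have hc' : 1 - (μ {c}).toReal ≤ ((Measure.dirac c - μ) univ).toReal :=
    (ENNReal.le_toReal_sub (measure_ne_top μ {c})).trans
      (ENNReal.toReal_mono (measure_ne_top _ _) hc)
  have hcompl' : (μ univ).toReal - (μ {c}).toReal ≤ ((μ - Measure.dirac c) univ).toReal := by
    rw [← measureReal_def, ← measureReal_def, ← measureReal_compl (measurableSet_singleton c)]
    exact ENNReal.toReal_mono (measure_ne_top _ _) hcompl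
  rw [tvDist, ENNReal.toReal_add (measure_ne_top _ _) (measure_ne_top _ _)]
  linarith

end TotalVariation

section Transport

variable {α : Type*} [MeasurableSpace α] {μ ν : Measure α} {π : Measure (α × α)}

lemma isPlan_zero : IsPlan (0 : Measure (α × α)) 0 0 := by
  simp [IsPlan]

lemma isPlan_dirac (c d : α) :
    IsPlan (Measure.dirac (c, d)) (Measure.dirac c) (Measure.dirac d) :=
  ⟨Measure.map_dirac' measurable_fst _, Measure.map_dirac' measurable_snd _⟩

lemma exists_isPlan [IsFiniteMeasure μ] [IsFiniteMeasure ν] (h : μ univ = ν univ) :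
    ∃ π, IsPlan π μ ν := by
  by_cases h0 : μ univ = 0
  · obtain rfl : μ = 0 := Measure.measure_univ_eq_zero.mp h0
    obtain rfl : ν = 0 := Measure.measure_univ_eq_zero.mp (h ▸ h0)
    exact ⟨0, isPlan_zero⟩
  · refine ⟨(μ univ)⁻¹ • μ.prod ν, ?_, ?_⟩ <;>
    · rw [Measure.map_smul]
      simp only [Measure.map_fst_prod, Measure.map_snd_prod, ← h, smul_smul,
        ENNReal.inv_mul_cancel h0 (measure_ne_top _ _), one_smul]

lemma IsPlan.apply_univ (hπ : IsPlan π μ ν) : π univ = μ univ := by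
  rw [← hπ.1, Measure.map_apply measurable_fst MeasurableSet.univ, preimage_univ]

lemma IsPlan.add_apply_singleton_le [MeasurableSingletonClass α] (hπ : IsPlan π μ ν)
    (c d : α) : μ {c} + ν {d} ≤ μ univ + π {(c, d)} := by
  have hfst : π (Prod.fst ⁻¹' {c}) = μ {c} := by
    rw [← hπ.1, Measure.map_apply measurable_fst (measurableSet_singleton c)]
  have hsnd : π (Prod.snd ⁻¹' {d}) = ν {d} := by
    rw [← hπ.2, Measure.map_apply measurable_snd (measurableSet_singleton d)]
  have hinter : (Prod.fst ⁻¹' {c} ∩ Prod.snd ⁻¹' {d} : Set (α × α)) = {(c, d)} := by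
    ext z
    simp [Prod.ext_iff]
  rw [← hfst, ← hsnd, ← hπ.apply_univ,
    ← measure_union_add_inter _ ((measurableSet_singleton d).preimage measurable_snd), hinter]
  gcongr
  exact subset_univ _

end Transport

lemma ofReal_dist_rpow_le {E : Type*} [SeminormedAddCommGroup E] {p : ℝ} (hp : 1 ≤ p)
    (x y : E) :
    ENNReal.ofReal (dist x y ^ p) ≤
      2 ^ (p - 1) * (ENNReal.ofReal (‖x‖ ^ p) + ENNReal.ofReal (‖y‖ ^ p)) := by
  have hp0 : 0 ≤ p := zero_le_one.trans hp
  rw [← ENNReal.ofReal_rpow_of_nonneg dist_nonneg hp0,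
    ← ENNReal.ofReal_rpow_of_nonneg (norm_nonneg x) hp0,
    ← ENNReal.ofReal_rpow_of_nonneg (norm_nonneg y) hp0]
  calc ENNReal.ofReal (dist x y) ^ p ≤ (ENNReal.ofReal ‖x‖ + ENNReal.ofReal ‖y‖) ^ p := by
        rw [← ENNReal.ofReal_add (norm_nonneg x) (norm_nonneg y)]
        gcongr
        exact dist_le_norm_add_norm x y
    _ ≤ _ := ENNReal.rpow_add_le_mul_rpow_add_rpow _ _ hp

section Wasserstein

variable {E : Type*} [NormedAddCommGroup E] [MeasurableSpace E]
  {p w : ℝ} {μ ν : Measure E} {π : Measure (E × E)}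

lemma finMom_zero : FinMom p (0 : Measure E) := by
  simp [FinMom]

lemma finMom_dirac [MeasurableSingletonClass E] (c : E) : FinMom p (Measure.dirac c) := by
  simp [FinMom, lintegral_dirac]

lemma Wcost_zero : Wcost p (0 : Measure (E × E)) = 0 := by
  simp [Wcost]

lemma Wcost_dirac [MeasurableSingletonClass E] (c d : E) :
    Wcost p (Measure.dirac (c, d)) = ENNReal.ofReal (dist c d ^ p) := by
  simp [Wcost, lintegral_dirac]

lemma ofReal_dist_rpow_mul_le_Wcost [MeasurableSingletonClass E] (c d : E) :
    ENNReal.ofReal (dist c d ^ p) * π {(c, d)} ≤ Wcost p π := by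
  calc ENNReal.ofReal (dist c d ^ p) * π {(c, d)}
      = ∫⁻ z in {(c, d)}, ENNReal.ofReal (dist z.1 z.2 ^ p) ∂π :=
        (lintegral_singleton (fun z : E × E ↦ ENNReal.ofReal (dist z.1 z.2 ^ p)) (c, d)).symm
    _ ≤ Wcost p π := setLIntegral_le_lintegral _ _

lemma IsPlan.Wcost_ne_top [OpensMeasurableSpace E] (hp : 1 ≤ p) (hπ : IsPlan π μ ν)
    (hμ : FinMom p μ) (hν : FinMom p ν) : Wcost p π ≠ ⊤ := by
  set f : E → ℝ≥0∞ := fun y ↦ ENNReal.ofReal (‖y‖ ^ p)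
  have hf : Measurable f := (measurable_norm.pow_const p).ennreal_ofReal
  have hbound : Wcost p π ≤ 2 ^ (p - 1) * (∫⁻ y, f y ∂μ + ∫⁻ y, f y ∂ν) :=
    calc Wcost p π ≤ ∫⁻ z, 2 ^ (p - 1) * (f z.1 + f z.2) ∂π :=
          lintegral_mono fun z ↦ ofReal_dist_rpow_le hp z.1 z.2
      _ = 2 ^ (p - 1) * (∫⁻ z, f z.1 ∂π + ∫⁻ z, f z.2 ∂π) := by
          rw [lintegral_const_mul' _ _ (by simp),
            lintegral_add_left (f := fun z : E × E ↦ f z.1) (hf.comp measurable_fst)]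
      _ = 2 ^ (p - 1) * (∫⁻ y, f y ∂μ + ∫⁻ y, f y ∂ν) := by
          rw [← hπ.1, ← hπ.2, lintegral_map hf measurable_fst, lintegral_map hf measurable_snd]
  have hconst : (2 : ℝ≥0∞) ^ (p - 1) ≠ ⊤ :=
    ENNReal.rpow_ne_top_of_nonneg (by linarith) ENNReal.ofNat_ne_top
  exact ne_top_of_le_ne_top (ENNReal.mul_ne_top hconst (ENNReal.add_ne_top.2 ⟨hμ.ne, hν.ne⟩))
    hbound

lemma Wp_nonneg : 0 ≤ Wp p μ ν := ENNReal.toReal_nonneg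

lemma ofReal_rpow_rpow_one_div (hp : 0 < p) (hw : 0 ≤ w) :
    ENNReal.ofReal (w ^ p) ^ (1 / p) = ENNReal.ofReal w := by
  rw [← ENNReal.ofReal_rpow_of_nonneg hw hp.le, ← ENNReal.rpow_mul, mul_one_div_cancel hp.ne',
    ENNReal.rpow_one]

lemma Wp_le_of_isPlan (hp : 0 < p) (hw : 0 ≤ w) (hπ : IsPlan π μ ν)
    (hcost : Wcost p π ≤ ENNReal.ofReal (w ^ p)) : Wp p μ ν ≤ w := by
  refine ENNReal.toReal_le_of_le_ofReal hw ?_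
  rw [← ofReal_rpow_rpow_one_div hp hw]
  gcongr
  exact sInf_le_of_le ⟨π, hπ, rfl⟩ hcost

lemma le_Wp (hp : 0 < p) (hw : 0 ≤ w) (hfin : ∃ π, IsPlan π μ ν ∧ Wcost p π ≠ ⊤)
    (hcost : ∀ π, IsPlan π μ ν → ENNReal.ofReal (w ^ p) ≤ Wcost p π) : w ≤ Wp p μ ν := by
  obtain ⟨π₀, hπ₀, hfin₀⟩ := hfin
  have hinf : sInf (Wcost p '' {π | IsPlan π μ ν}) ≠ ⊤ :=
    ne_top_of_le_ne_top hfin₀ (sInf_le ⟨π₀, hπ₀, rfl⟩)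
  refine (ENNReal.ofReal_le_iff_le_toReal
    (ENNReal.rpow_ne_top_of_nonneg (by positivity) hinf)).1 ?_
  rw [← ofReal_rpow_rpow_one_div hp hw]
  gcongr
  exact le_sInf <| forall_mem_image.2 hcost

lemma Wp_zero (hp : 0 < p) : Wp p (0 : Measure E) 0 = 0 :=
  (Wp_le_of_isPlan hp le_rfl isPlan_zero (by simp [Wcost_zero])).antisymm Wp_nonneg

lemma Wp_dirac_le [MeasurableSingletonClass E] (hp : 0 < p) (c d : E) :
    Wp p (Measure.dirac c) (Measure.dirac d) ≤ dist c d :=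
  Wp_le_of_isPlan hp dist_nonneg (isPlan_dirac c d) (Wcost_dirac c d).le

/-- Whatever `μ` and `ν` put at `c` and `d` in excess of their common mass is carried from `c`
to `d` by every plan. -/
lemma dist_mul_min_le_Wp [MeasurableSingletonClass E] [OpensMeasurableSpace E] (hp : 1 ≤ p)
    [IsFiniteMeasure μ] [IsFiniteMeasure ν] (hμ : FinMom p μ) (hν : FinMom p ν)
    (hmass : μ univ = ν univ) (c d : E) :
    dist c d * min 1 ((μ {c}).toReal + (ν {d}).toReal - (μ univ).toReal) ≤ Wp p μ ν := by
  set s := min 1 ((μ {c}).toReal + (ν {d}).toReal - (μ univ).toReal)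
  rcases le_or_gt s 0 with hs | hs
  · exact (mul_nonpos_of_nonneg_of_nonpos dist_nonneg hs).trans Wp_nonneg
  have hp0 : 0 < p := zero_lt_one.trans_le hp
  obtain ⟨π₀, hπ₀⟩ := exists_isPlan hmass
  refine le_Wp hp0 (by positivity) ⟨π₀, hπ₀, hπ₀.Wcost_ne_top hp hμ hν⟩ fun π hπ ↦ ?_
  have : IsFiniteMeasure π := ⟨hπ.apply_univ ▸ measure_lt_top μ univ⟩
  have hexcess : s ≤ (π {(c, d)}).toReal := by
    have h := ENNReal.toReal_mono (by simp [ENNReal.add_eq_top, measure_ne_top])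
      (hπ.add_apply_singleton_le c d)
    rw [ENNReal.toReal_add (measure_ne_top _ _) (measure_ne_top _ _),
      ENNReal.toReal_add (measure_ne_top _ _) (measure_ne_top _ _)] at h
    linarith [min_le_right 1 ((μ {c}).toReal + (ν {d}).toReal - (μ univ).toReal)]
  have hsp : s ^ p ≤ s :=
    (Real.rpow_le_rpow_of_exponent_ge hs (min_le_left _ _) hp).trans_eq (Real.rpow_one s)
  calc ENNReal.ofReal ((dist c d * s) ^ p)
      = ENNReal.ofReal (dist c d ^ p) * ENNReal.ofReal (s ^ p) := by
        rw [Real.mul_rpow dist_nonneg hs.le, ENNReal.ofReal_mul (by positivity)]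
    _ ≤ ENNReal.ofReal (dist c d ^ p) * π {(c, d)} := by
        gcongr
        exact ENNReal.ofReal_le_of_le_toReal (hsp.trans hexcess)
    _ ≤ Wcost p π := ofReal_dist_rpow_mul_le_Wcost c d

end Wasserstein

section GeneralizedWasserstein

variable {E : Type*} [NormedAddCommGroup E] [MeasurableSpace E]
  {a b p : ℝ} {μ ν μ' ν' : Measure E}

lemma gwSet_nonempty : (gwSet a b p μ ν).Nonempty :=
  ⟨_, 0, 0, inferInstance, inferInstance, finMom_zero, finMom_zero, rfl, rfl⟩

lemma bddBelow_gwSet (ha : 0 ≤ a) (hb : 0 ≤ b) : BddBelow (gwSet a b p μ ν) := by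
  refine ⟨0, ?_⟩
  rintro r ⟨μ', ν', -, -, -, -, -, rfl⟩
  have := tvDist_nonneg (μ := μ) (ν := μ')
  have := tvDist_nonneg (μ := ν) (ν := ν')
  have := Wp_nonneg (p := p) (μ := μ') (ν := ν')
  positivity

lemma GW_le (ha : 0 ≤ a) (hb : 0 ≤ b) [IsFiniteMeasure μ'] [IsFiniteMeasure ν']
    (hμ' : FinMom p μ') (hν' : FinMom p ν') (hmass : μ' univ = ν' univ) :
    GW a b p μ ν ≤ a * tvDist μ μ' + a * tvDist ν ν' + b * Wp p μ' ν' :=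
  csInf_le (bddBelow_gwSet ha hb) ⟨μ', ν', inferInstance, inferInstance, hμ', hν', hmass, rfl⟩

lemma le_GW {C : ℝ} (h : ∀ r ∈ gwSet a b p μ ν, C ≤ r) : C ≤ GW a b p μ ν :=
  le_csInf gwSet_nonempty h

lemma GW_dirac_dirac_le_two_mul (hp : 0 < p) (ha : 0 ≤ a) (hb : 0 ≤ b) (c d : E) :
    GW a b p (Measure.dirac c) (Measure.dirac d) ≤ 2 * a :=
  calc GW a b p (Measure.dirac c) (Measure.dirac d)
      ≤ a * tvDist (Measure.dirac c) 0 + a * tvDist (Measure.dirac d) 0 + b * Wp p 0 0 :=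
        GW_le ha hb finMom_zero finMom_zero rfl
    _ = 2 * a := by simp [tvDist_zero_right, Wp_zero hp]; ring

lemma GW_dirac_dirac_le_mul_dist [MeasurableSingletonClass E] (hp : 0 < p) (ha : 0 ≤ a)
    (hb : 0 ≤ b) (c d : E) :
    GW a b p (Measure.dirac c) (Measure.dirac d) ≤ b * dist c d :=
  calc GW a b p (Measure.dirac c) (Measure.dirac d)
      ≤ a * tvDist (Measure.dirac c) (Measure.dirac c) +
          a * tvDist (Measure.dirac d) (Measure.dirac d) +
          b * Wp p (Measure.dirac c) (Measure.dirac d) :=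
        GW_le ha hb (finMom_dirac c) (finMom_dirac d) (by simp)
    _ ≤ b * dist c d := by
        simpa [tvDist_self] using mul_le_mul_of_nonneg_left (Wp_dirac_le hp c d) hb

lemma min_le_GW_dirac_dirac [MeasurableSingletonClass E] [OpensMeasurableSpace E]
    (hp : 1 ≤ p) (ha : 0 ≤ a) (hb : 0 ≤ b) (c d : E) :
    min (2 * a) (b * dist c d) ≤ GW a b p (Measure.dirac c) (Measure.dirac d) := by
  refine le_GW ?_
  rintro r ⟨μ', ν', _, _, hμ', hν', hmass, rfl⟩
  set s := min 1 ((μ' {c}).toReal + (ν' {d}).toReal - (μ' univ).toReal)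
  have hW : b * (dist c d * s) ≤ b * Wp p μ' ν' :=
    mul_le_mul_of_nonneg_left (dist_mul_min_le_Wp hp hμ' hν' hmass c d) hb
  have htv₁ := one_add_sub_two_mul_le_tvDist_dirac c (μ := μ')
  have htv₂ := one_add_sub_two_mul_le_tvDist_dirac d (μ := ν')
  rw [← hmass] at htv₂
  have htv :
      a * (2 - 2 * s) ≤ a * tvDist (Measure.dirac c) μ' + a * tvDist (Measure.dirac d) ν' := by
    rw [← mul_add]
    refine mul_le_mul_of_nonneg_left ?_ ha
    rcases min_cases 1 ((μ' {c}).toReal + (ν' {d}).toReal - (μ' univ).toReal) with h | h <;>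
      linarith [h.1, tvDist_nonneg (μ := Measure.dirac c) (ν := μ'),
        tvDist_nonneg (μ := Measure.dirac d) (ν := ν')]
  have hmin₁ := min_le_left (2 * a) (b * dist c d)
  have hmin₂ := min_le_right (2 * a) (b * dist c d)
  rcases le_or_gt s 0 with hs | hs
  · nlinarith [mul_nonneg hb (Wp_nonneg (p := p) (μ := μ') (ν := ν'))]
  · -- the cost dominates the convex combination `(1 - s) • 2a + s • b dist c d`
    nlinarith [mul_le_mul_of_nonneg_left hmin₁ (sub_nonneg.2 (min_le_left 1 _ : s ≤ 1)),
      mul_le_mul_of_nonneg_left hmin₂ hs.le]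

theorem GW_dirac_dirac [MeasurableSingletonClass E] [OpensMeasurableSpace E] (hp : 1 ≤ p)
    (ha : 0 ≤ a) (hb : 0 ≤ b) (c d : E) :
    GW a b p (Measure.dirac c) (Measure.dirac d) = min (2 * a) (b * dist c d) := by
  have hp₀ : 0 < p := zero_lt_one.trans_le hp
  exact le_antisymm
    (le_min (GW_dirac_dirac_le_two_mul hp₀ ha hb c d)
      (GW_dirac_dirac_le_mul_dist hp₀ ha hb c d))
    (min_le_GW_dirac_dirac hp ha hb c d)

end GeneralizedWasserstein

theorem gw_dirac_dirac (a b p : ℝ) (hp : 1 ≤ p) (ha : 0 < a) (hb : 0 < b)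
    (x : ℝ) (hx : 0 ≤ x) :
    GW a b p (Measure.dirac (0 : ℝ)) (Measure.dirac x) = min (2 * a) (b * x) := by
  rw [GW_dirac_dirac hp ha.le hb.le, Real.dist_eq, zero_sub, abs_neg, abs_of_nonneg hx]
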